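/- Let v be a realizable valuated matroid of rank r+1 on E = {0,…,n} given by nonzero vectors f₀,…,fₙ ∈ (K^{r+1})*, let B = {b₀,…,b_r} be a basis (v(B) ≠ ∞), and let u = (u₀,…,uₙ) ∈ ℝ^{n+1} be a point of the tropical linear space such that B is a basis of the initial matroid at u (i.e., B minimizes v(σ) − Σ_{i∈σ} u_i over all (r+1)-subsets σ). Then for every k ∈ E \ B, writing f_k = Σ_{i∈B} λᵢ fᵢ, we have u_k = min_{i∈B} (val(λᵢ) + u_i). Equivalently, the seminorm diagonalized by B with weights (u_b)_{b∈B} satisfies −log‖f_k‖ = u_k for all k ∈ E. -/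

import Mathlib

/-- The minimum of `g` over `τ` is "attained at least twice": either all
values are `∞`, or at least two distinct indices realize a finite minimum. -/
def MinTwice {E : Type*} (τ : Finset E) (g : E → WithTop ℝ) : Prop :=
  (∀ e ∈ τ, g e = ⊤) ∨
    ∃ e₁ ∈ τ, ∃ e₂ ∈ τ, e₁ ≠ e₂ ∧ g e₁ = g e₂ ∧ g e₁ ≠ ⊤ ∧ ∀ e ∈ τ, g e₁ ≤ g e

/-- The value `val(det[f_a | a ∈ A])` associated to an `(r+1)`-subset `A` of
column indices of the family `f`, with the convention that subsets of the
wrong cardinality get value `∞`. -/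
noncomputable def valMat {K : Type*} [Field K] {n r : ℕ} (val : K → WithTop ℝ)
    (f : Fin (n + 1) → Fin (r + 1) → K) (A : Finset (Fin (n + 1))) : WithTop ℝ :=
  if hA : A.card = r + 1 then
    val (Matrix.det (Matrix.of fun i j => f (A.orderIsoOfFin hA j).1 i))
  else ⊤

/-!
Put `τ = B ∪ {k}`. Expanding `f_k = ∑ λᵢ fᵢ` in the determinant shows that exchanging
`i ∈ B` for `k` multiplies `det f_B` by `λᵢ`, so the tropical Plücker values on `τ` are
`v(τ \ {i}) + uᵢ = v(B) + val(λᵢ) + uᵢ` for `i ∈ B` and `v(τ \ {k}) + u_k = v(B) + u_k`.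
Since `B` is a basis of the initial matroid at `u`, the latter is the minimum, and the
tropical linear space condition forces it to be attained at some `i ∈ B` as well.
-/

section Valuation

variable {K : Type*} [Field K] {val : K → WithTop ℝ}

lemma val_eq_zero_of_mul_self_eq_one (hval1 : val 1 = 0)
    (hvalmul : ∀ x y : K, val (x * y) = val x + val y) {x : K} (hx : x * x = 1) :
    val x = 0 := by
  have h : val x + val x = 0 := by rw [← hvalmul, hx, hval1]
  generalize val x = a at h ⊢
  induction a using WithTop.recTopCoe with
  | top => simp at h
  | coe a =>
    norm_cast at h ⊢
    linarith

lemma val_det_submatrix_perm (hval1 : val 1 = 0)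
    (hvalmul : ∀ x y : K, val (x * y) = val x + val y) {m : ℕ}
    (M : Matrix (Fin m) (Fin m) K) (π : Equiv.Perm (Fin m)) :
    val (M.submatrix π id).det = val M.det := by
  have hsign : ((Equiv.Perm.sign π : ℤ) : K) * ((Equiv.Perm.sign π : ℤ) : K) = 1 := by
    rw [← Int.cast_mul, ← Units.val_mul, Int.units_mul_self]
    simp
  rw [Matrix.det_permute, hvalmul, val_eq_zero_of_mul_self_eq_one hval1 hvalmul hsign,
    zero_add]

end Valuation

lemma Finset.card_insert_erase_of_notMem {α : Type*} [DecidableEq α] {s : Finset α} {a b : α}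
    (ha : a ∉ s) (hb : b ∈ s) : (insert a (s.erase b)).card = s.card := by
  rw [Finset.card_insert_of_notMem (fun h => ha (Finset.mem_of_mem_erase h)),
    Finset.card_erase_add_one hb]

lemma Function.Injective.update_of_forall_ne {ι α : Type*} [DecidableEq ι] {σ : ι → α}
    (hσ : Function.Injective σ) {k : α} (hk : ∀ j, σ j ≠ k) (j₀ : ι) :
    Function.Injective (Function.update σ j₀ k) := by
  intro a b hab
  by_cases ha : a = j₀ <;> by_cases hb : b = j₀
  · rw [ha, hb]
  · rw [ha, Function.update_self, Function.update_of_ne hb] at hab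
    exact absurd hab.symm (hk b)
  · rw [hb, Function.update_self, Function.update_of_ne ha] at hab
    exact absurd hab (hk a)
  · rw [Function.update_of_ne ha, Function.update_of_ne hb] at hab
    exact hσ hab

section ValMat

variable {K : Type*} [Field K] {n r : ℕ} {val : K → WithTop ℝ}
  (hval1 : val 1 = 0) (hvalmul : ∀ x y : K, val (x * y) = val x + val y)
  (f : Fin (n + 1) → Fin (r + 1) → K)

include hval1 hvalmul

lemma valMat_eq_val_det_comp {A : Finset (Fin (n + 1))} (hA : A.card = r + 1)
    {σ : Fin (r + 1) → Fin (n + 1)} (hσ : Function.Injective σ) (hσA : ∀ j, σ j ∈ A) :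
    valMat val f A = val (Matrix.of (f ∘ σ)).det := by
  set e := A.orderIsoOfFin hA
  set π : Fin (r + 1) → Fin (r + 1) := fun j => e.symm ⟨σ j, hσA j⟩
  have hπ : Function.Injective π := fun a b hab =>
    hσ (congrArg Subtype.val (e.symm.injective hab))
  have hcomp : Matrix.of (f ∘ σ) =
      (Matrix.of fun j => f (e j)).submatrix (Equiv.ofBijective π hπ.bijective_of_finite) id := by
    ext j i
    simp [π]
  rw [hcomp, val_det_submatrix_perm hval1 hvalmul, valMat, dif_pos hA, ← Matrix.det_transpose]
  rfl

lemma valMat_insert_erase {B : Finset (Fin (n + 1))} (hB : B.card = r + 1)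
    {k : Fin (n + 1)} (hk : k ∉ B) {lam : Fin (n + 1) → K}
    (hrep : f k = ∑ b ∈ B, lam b • f b) {i : Fin (n + 1)} (hi : i ∈ B) :
    valMat val f (insert k (B.erase i)) = val (lam i) + valMat val f B := by
  set τ := B.orderEmbOfFin hB
  obtain ⟨j₀, rfl⟩ : i ∈ Set.range τ := by rwa [B.range_orderEmbOfFin hB]
  have hcard : (insert k (B.erase (τ j₀))).card = r + 1 := by
    rw [Finset.card_insert_erase_of_notMem hk hi, hB]
  have hτk : ∀ j, τ j ≠ k := fun j h => hk (h ▸ B.orderEmbOfFin_mem hB j)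
  have hinj : Function.Injective (Function.update τ j₀ k) :=
    τ.injective.update_of_forall_ne hτk j₀
  have hmem : ∀ j, Function.update τ j₀ k j ∈ insert k (B.erase (τ j₀)) := by
    intro j
    rcases eq_or_ne j j₀ with rfl | hj
    · simp
    · rw [Function.update_of_ne hj]
      exact Finset.mem_insert_of_mem
        (Finset.mem_erase.mpr ⟨τ.injective.ne hj, B.orderEmbOfFin_mem hB j⟩)
  have hrep' : f k = ∑ j, lam (τ j) • Matrix.of (f ∘ τ) j := by
    rw [hrep, ← B.map_orderEmbOfFin_univ hB, Finset.sum_map]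
    rfl
  have hdet : (Matrix.of (f ∘ Function.update τ j₀ k)).det =
      lam (τ j₀) * (Matrix.of (f ∘ τ)).det := by
    rw [Function.comp_update, hrep']
    exact Matrix.det_updateRow_sum _ _ _
  rw [valMat_eq_val_det_comp hval1 hvalmul f hcard hinj hmem, hdet, hvalmul,
    valMat_eq_val_det_comp hval1 hvalmul f hB τ.injective (B.orderEmbOfFin_mem hB)]

lemma coe_le_val_add_of_initial {u : Fin (n + 1) → ℝ} {B : Finset (Fin (n + 1))}
    (hB : B.card = r + 1) (hBbase : valMat val f B ≠ ⊤)
    (hinit : ∀ σ : Finset (Fin (n + 1)), σ.card = r + 1 →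
      valMat val f B + ((∑ i ∈ σ, u i : ℝ) : WithTop ℝ) ≤
        valMat val f σ + ((∑ i ∈ B, u i : ℝ) : WithTop ℝ))
    {k : Fin (n + 1)} (hk : k ∉ B) {lam : Fin (n + 1) → K}
    (hrep : f k = ∑ b ∈ B, lam b • f b) {i : Fin (n + 1)} (hi : i ∈ B) :
    (u k : WithTop ℝ) ≤ val (lam i) + (u i : WithTop ℝ) := by
  have h := hinit _ ((Finset.card_insert_erase_of_notMem hk hi).trans hB)
  rw [valMat_insert_erase hval1 hvalmul f hB hk hrep hi] at h
  have hsum : ∑ x ∈ insert k (B.erase i), u x + u i = u k + ∑ x ∈ B, u x := by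
    rw [Finset.sum_insert (fun h => hk (Finset.mem_of_mem_erase h)), add_assoc,
      Finset.sum_erase_add _ _ hi]
  rw [← WithTop.add_le_add_iff_right (WithTop.coe_ne_top (a := ∑ x ∈ B, u x)),
    ← WithTop.add_le_add_iff_left hBbase]
  calc valMat val f B + (u k + (∑ x ∈ B, u x : ℝ))
      = valMat val f B + (∑ x ∈ insert k (B.erase i), u x : ℝ) + u i := by
        rw [add_assoc, ← WithTop.coe_add, ← WithTop.coe_add, hsum]
    _ ≤ val (lam i) + valMat val f B + (∑ x ∈ B, u x : ℝ) + u i := by gcongr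
    _ = valMat val f B + (val (lam i) + u i + (∑ x ∈ B, u x : ℝ)) := by abel

end ValMat

lemma MinTwice.exists_ne_eq_of_forall_le {E : Type*} {τ : Finset E} {g : E → WithTop ℝ}
    (h : MinTwice τ g) {k : E} (hk : k ∈ τ) (hgk : g k ≠ ⊤)
    (hmin : ∀ e ∈ τ, g k ≤ g e) :
    ∃ e ∈ τ, e ≠ k ∧ g e = g k := by
  rcases h with hall | ⟨e₁, he₁, e₂, he₂, hne, heq, -, hle⟩
  · exact absurd (hall k hk) hgk
  · have h₁ : g e₁ = g k := le_antisymm (hle k hk) (hmin e₁ he₁)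
    rcases eq_or_ne e₁ k with rfl | h₁k
    · exact ⟨e₂, he₂, hne.symm, heq.symm⟩
    · exact ⟨e₁, he₁, h₁k, h₁⟩

/-- Local section computation: if `u` is a point of the tropical linear space of
the realizable valuated matroid of `f₀,…,fₙ` and `B` is a basis of the initial
matroid at `u`, then for `k ∉ B`, writing `f_k = ∑_{i ∈ B} λᵢ fᵢ`, one has
`u_k = min_{i ∈ B} (val(λᵢ) + uᵢ)`; i.e., the seminorm diagonalized by `B` with
weights `(u_b)` satisfies `−log‖f_k‖ = u_k`. -/
theorem local_section_is_right_inverse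
    {K : Type*} [Field K] (n r : ℕ)
    (val : K → WithTop ℝ)
    (hval1 : val 1 = 0)
    (hvalmul : ∀ x y : K, val (x * y) = val x + val y)
    (f : Fin (n + 1) → Fin (r + 1) → K)
    (u : Fin (n + 1) → ℝ)
    (htrop : ∀ τ : Finset (Fin (n + 1)), τ.card = r + 2 →
      MinTwice τ (fun e => valMat val f (τ.erase e) + (u e : WithTop ℝ)))
    (B : Finset (Fin (n + 1))) (hB : B.card = r + 1)
    (hBbase : valMat val f B ≠ ⊤)
    (hinit : ∀ σ : Finset (Fin (n + 1)), σ.card = r + 1 →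
      valMat val f B + ((∑ i ∈ σ, u i : ℝ) : WithTop ℝ) ≤
        valMat val f σ + ((∑ i ∈ B, u i : ℝ) : WithTop ℝ))
    (k : Fin (n + 1)) (hk : k ∉ B)
    (lam : Fin (n + 1) → K) (hrep : f k = ∑ b ∈ B, lam b • f b) :
    (u k : WithTop ℝ) =
      B.inf' (Finset.card_pos.mp (by omega))
        (fun i => val (lam i) + (u i : WithTop ℝ)) := by
  set g : Fin (n + 1) → WithTop ℝ := fun e => valMat val f ((insert k B).erase e) + u e
  have hgk : g k = u k + valMat val f B := by
    simp only [g, Finset.erase_insert hk, add_comm]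
  have hgB : ∀ i ∈ B, g i = val (lam i) + u i + valMat val f B := by
    intro i hi
    simp only [g, Finset.erase_insert_of_ne (fun h : k = i => hk (h ▸ hi)),
      valMat_insert_erase hval1 hvalmul f hB hk hrep hi]
    abel
  have hle : ∀ i ∈ B, (u k : WithTop ℝ) ≤ val (lam i) + u i := fun i hi =>
    coe_le_val_add_of_initial hval1 hvalmul f hB hBbase hinit hk hrep hi
  have hmin : ∀ e ∈ insert k B, g k ≤ g e := by
    intro e he
    rcases Finset.mem_insert.mp he with rfl | hi
    · exact le_rfl
    · rw [hgk, hgB e hi, WithTop.add_le_add_iff_right hBbase]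
      exact hle e hi
  have hτ : MinTwice (insert k B) g := htrop _ (by rw [Finset.card_insert_of_notMem hk, hB])
  have hgk_ne_top : g k ≠ ⊤ := hgk ▸ WithTop.add_ne_top.mpr ⟨WithTop.coe_ne_top, hBbase⟩
  obtain ⟨i, hi, hik, hgi⟩ :=
    hτ.exists_ne_eq_of_forall_le (Finset.mem_insert_self k B) hgk_ne_top hmin
  have hiB : i ∈ B := (Finset.mem_insert.mp hi).resolve_left hik
  rw [hgk, hgB i hiB, WithTop.add_right_inj hBbase] at hgi
  exact le_antisymm (Finset.le_inf' _ _ hle) (hgi ▸ Finset.inf'_le _ hiB)
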